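/- Let r ≥ 1, h, v ≥ 0 be integers and c₁sq, crsq ∈ ℤ. The system in positive reals β₁,…,β_r, δ₁,…,δ_h, γ₁,…,γ_v consisting of: δ₁ + (crsq - 1)•β_r > 0 (if h ≥ 1), γ₁ + (c₁sq - 1)•β₁ > 0 (if v ≥ 1), δᵢ - 2δ_{i-1} + δ_{i-2} > 0 for 2 ≤ i ≤ h (with δ₀ := β_r), and γ_j - 2γ_{j-1} + γ_{j-2} > 0 for 2 ≤ j ≤ v (with γ₀ := β₁), is feasible, with solutions having all coordinates arbitrarily small. -/

import Mathlib

/-!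
Both tails can be taken geometric: `δ i = b * K ^ i` and `γ j = b * L ^ j` over the constant
chain `β ≡ b`. The second differences of a geometric sequence are `b * K ^ n * (K - 1) ^ 2 > 0`
as soon as `K ≠ 1`, and the first tail inequality reads `b * (K + c - 1) > 0`, which holds once
`K ≥ 2 - c`. Shrinking `b` then makes every coordinate smaller than any given `ε`.
-/

noncomputable def tailRatio (c : ℤ) : ℝ := max 2 (2 - c)

lemma one_lt_tailRatio (c : ℤ) : 1 < tailRatio c :=
  one_lt_two.trans_le (le_max_left _ _)

lemma tailRatio_add_sub_one_mul_pos (c : ℤ) {b : ℝ} (hb : 0 < b) :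
    b * tailRatio c ^ 1 + ((c : ℝ) - 1) * b > 0 := by
  have : (2 : ℝ) - c ≤ tailRatio c := le_max_right _ _
  nlinarith

lemma geom_sub_two_mul_add_pos {b K : ℝ} (hb : 0 < b) (hK₀ : 0 < K) (hK₁ : K ≠ 1)
    {i : ℕ} (hi : 2 ≤ i) : b * K ^ i - 2 * (b * K ^ (i - 1)) + b * K ^ (i - 2) > 0 := by
  obtain ⟨n, rfl⟩ := Nat.exists_eq_add_of_le' hi
  have : K - 1 ≠ 0 := sub_ne_zero.mpr hK₁
  calc b * K ^ (n + 2) - 2 * (b * K ^ (n + 2 - 1)) + b * K ^ (n + 2 - 2)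
      = b * K ^ n * (K - 1) ^ 2 := by simp only [Nat.add_sub_cancel, Nat.add_succ_sub_one]; ring
    _ > 0 := by positivity

lemma mul_pow_lt_of_le {b K ε : ℝ} (hb : 0 ≤ b) (hK : 1 ≤ K) {i n : ℕ} (hi : i ≤ n)
    (hn : b * K ^ n < ε) : b * K ^ i < ε :=
  (mul_le_mul_of_nonneg_left (pow_le_pow_right₀ hK hi) hb).trans_lt hn

lemma div_add_mul_lt_self {ε x y : ℝ} (hε : 0 < ε) (hx : 0 ≤ x) (hy : 0 < y) :
    ε / (x + y) * x < ε := by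
  rw [div_mul_eq_mul_div, div_lt_iff₀ (by positivity)]
  nlinarith

theorem stmt7_general (r h v : ℕ) (c1sq crsq : ℤ) :
    ∀ ε > (0:ℝ), ∃ β δ γ : ℕ → ℝ,
      δ 0 = β r ∧ γ 0 = β 1 ∧
      (∀ i, 1 ≤ i → i ≤ r → 0 < β i ∧ β i < ε) ∧
      (∀ i, 1 ≤ i → i ≤ h → 0 < δ i ∧ δ i < ε) ∧
      (∀ j, 1 ≤ j → j ≤ v → 0 < γ j ∧ γ j < ε) ∧
      (1 ≤ h → δ 1 + ((crsq:ℝ) - 1) * β r > 0) ∧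
      (1 ≤ v → γ 1 + ((c1sq:ℝ) - 1) * β 1 > 0) ∧
      (∀ i, 2 ≤ i → i ≤ h → δ i - 2 * δ (i-1) + δ (i-2) > 0) ∧
      (∀ j, 2 ≤ j → j ≤ v → γ j - 2 * γ (j-1) + γ (j-2) > 0) := by
  intro ε hε
  set K := tailRatio crsq
  set L := tailRatio c1sq
  have hK := one_lt_tailRatio crsq
  have hL := one_lt_tailRatio c1sq
  set b := ε / (K ^ h + L ^ v)
  have hb : 0 < b := div_pos hε (by positivity)
  have hδ : ∀ i ≤ h, b * K ^ i < ε := fun i hi =>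
    mul_pow_lt_of_le hb.le hK.le hi (div_add_mul_lt_self hε (by positivity) (by positivity))
  have hγ : ∀ j ≤ v, b * L ^ j < ε := fun j hj => mul_pow_lt_of_le hb.le hL.le hj <| by
    rw [show b = ε / (L ^ v + K ^ h) by rw [add_comm]]
    exact div_add_mul_lt_self hε (by positivity) (by positivity)
  refine ⟨fun _ => b, fun i => b * K ^ i, fun j => b * L ^ j, by simp, by simp,
    fun _ _ _ => ⟨hb, by simpa using hδ 0 h.zero_le⟩,
    fun i _ hi => ⟨by positivity, hδ i hi⟩, fun j _ hj => ⟨by positivity, hγ j hj⟩,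
    fun _ => tailRatio_add_sub_one_mul_pos crsq hb, fun _ => tailRatio_add_sub_one_mul_pos c1sq hb,
    fun _ hi _ => geom_sub_two_mul_add_pos hb (by positivity) hK.ne' hi,
    fun _ hj _ => geom_sub_two_mul_add_pos hb (by positivity) hL.ne' hj⟩

/-- Feasibility of the combined tail blow-up linear program `LP~(S,C)` on both
tails, with all coordinates arbitrarily small (Theorem TailThm1). Here
`δ 0 = β r` and `γ 0 = β 1` are conventions. -/
theorem stmt7 (r h v : ℕ) (hr : 1 ≤ r) (c1sq crsq : ℤ) :
    ∀ ε > (0:ℝ), ∃ β δ γ : ℕ → ℝ,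
      δ 0 = β r ∧ γ 0 = β 1 ∧
      (∀ i, 1 ≤ i → i ≤ r → 0 < β i ∧ β i < ε) ∧
      (∀ i, 1 ≤ i → i ≤ h → 0 < δ i ∧ δ i < ε) ∧
      (∀ j, 1 ≤ j → j ≤ v → 0 < γ j ∧ γ j < ε) ∧
      (1 ≤ h → δ 1 + ((crsq:ℝ) - 1) * β r > 0) ∧
      (1 ≤ v → γ 1 + ((c1sq:ℝ) - 1) * β 1 > 0) ∧
      (∀ i, 2 ≤ i → i ≤ h → δ i - 2 * δ (i-1) + δ (i-2) > 0) ∧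
      (∀ j, 2 ≤ j → j ≤ v → γ j - 2 * γ (j-1) + γ (j-2) > 0) :=
  stmt7_general r h v c1sq crsq
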